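/- arXiv:2411.13233 — 2 statements merged into one kernel-verified Lean document; each statement's English description precedes it below -/
import Mathlib

section
/- There is an injective map φ: 𝒩_B(f) → R_B(f; x₀, ω) defined by φ([x]) = Γ⁻¹(C_{(x,c_x)}), where x is a fixed point of f, c_x denotes the constant path at x, C_{(x,c_x)} is the path component of (x, c_x) in E_B(f), and Γ: R_B(f; x₀, ω) → π₀(E_B(f)) is the canonical bijection sending [θ] to the component of (x₀, θ∗ω). -/
open unitInterval

/-- The homotopy lifting property with respect to all spaces (Hurewicz fibration). -/
def IsHurewiczFibration {E B : Type} [TopologicalSpace E] [TopologicalSpace B]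
    (p : C(E, B)) : Prop :=
  ∀ (X : Type) [TopologicalSpace X] (H : C(X × I, B)) (h₀ : C(X, E)),
    (∀ x, H (x, 0) = p (h₀ x)) →
      ∃ H' : C(X × I, E), (∀ x, H' (x, 0) = h₀ x) ∧ ∀ z, p (H' z) = H z

variable {E B : Type} [TopologicalSpace E] [TopologicalSpace B]

/-- Loops at `x₀` lying in the fiber of `p` through `x₀`; they represent elements of
`π₁(Y, x₀)` where `Y = p⁻¹(p x₀)`. -/
def FiberLoop (p : C(E, B)) (x₀ : E) : Type :=
  {θ : Path x₀ x₀ // ∀ t, p (θ t) = p x₀}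

/-- Two fiber loops `θ`, `θ'` are Reidemeister related over `B` (for the fiber map `g` and
base path `w` from `x₀` to `g x₀`) if there are a loop `c` in `E` at `x₀` and a lift `H` of
the homotopy `(t,s) ↦ p (c t)` with `H(t,0) = c(t)`, `H(0,s) = (θ∗w)(s)`, `H(t,1) = g(c(t))`
and `H(1,s) = (θ'∗w)(s)`. -/
def ReidemeisterRelB (p : C(E, B)) (g : C(E, E)) {x₀ : E} (w : Path x₀ (g x₀)) :
    FiberLoop p x₀ → FiberLoop p x₀ → Prop := fun θ θ' =>
  ∃ (c : Path x₀ x₀) (H : C(I × I, E)),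
    (∀ t, H (t, 0) = c t) ∧
    (∀ s, H (0, s) = (θ.1.trans w) s) ∧
    (∀ t, H (t, 1) = g (c t)) ∧
    (∀ s, H (1, s) = (θ'.1.trans w) s) ∧
    (∀ t s, p (H (t, s)) = p (c t))

/-- The set of Reidemeister classes over `B`. -/
def ReidemeisterSetB (p : C(E, B)) (g : C(E, E)) {x₀ : E} (w : Path x₀ (g x₀)) : Type :=
  Quot (ReidemeisterRelB p g w)

/-- The `n`-th iterate of a continuous self-map, as a continuous map. -/
def iterC (f : C(E, E)) (n : ℕ) : C(E, E) := ⟨(⇑f)^[n], f.continuous.iterate n⟩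

/-- The path `n(ω) = ω ∗ f(ω) ∗ ⋯ ∗ f^{n−1}(ω)` from `x₀` to `f^n(x₀)`. -/
noncomputable def nPath (f : C(E, E)) {x₀ : E} (ω : Path x₀ (f x₀)) : (n : ℕ) → Path x₀ ((⇑f)^[n] x₀)
  | 0 => Path.refl x₀
  | 1 => ω
  | (n + 2) => (nPath f ω (n + 1)).trans (ω.map (f.continuous.iterate (n + 1)))

theorem fiber_iterate {p : C(E, B)} {f : C(E, E)} (hf : ∀ x, p (f x) = p x) :
    ∀ (k : ℕ) (x : E), p ((⇑f)^[k] x) = p x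
  | 0, _ => rfl
  | (k + 1), x => by
      rw [Function.iterate_succ_apply, fiber_iterate hf k (f x), hf x]

theorem fiber_trans {p : C(E, B)} {x₀ a b c : E} {γ : Path a b} {δ : Path b c}
    (hγ : ∀ t, p (γ t) = p x₀) (hδ : ∀ t, p (δ t) = p x₀) :
    ∀ t, p ((γ.trans δ) t) = p x₀ := by
  intro t
  rw [Path.trans_apply]
  split_ifs <;> first | exact hγ _ | exact hδ _

theorem fiber_symm {p : C(E, B)} {x₀ a b : E} {γ : Path a b}
    (hγ : ∀ t, p (γ t) = p x₀) : ∀ t, p (γ.symm t) = p x₀ := fun _ => hγ _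

theorem fiber_map {p : C(E, B)} {f : C(E, E)} (hf : ∀ x, p (f x) = p x) {x₀ a b : E}
    {γ : Path a b} (hγ : ∀ t, p (γ t) = p x₀) (k : ℕ) :
    ∀ t, p ((γ.map (f.continuous.iterate k)) t) = p x₀ := fun t => by
  show p ((⇑f)^[k] (γ t)) = p x₀
  rw [fiber_iterate hf k, hγ]

theorem fiber_nPath {p : C(E, B)} {f : C(E, E)} (hf : ∀ x, p (f x) = p x) {x₀ : E}
    {ω : Path x₀ (f x₀)} (hω : ∀ t, p (ω t) = p x₀) :
    ∀ (n : ℕ) (t : I), p (nPath f ω n t) = p x₀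
  | 0, _ => rfl
  | 1, t => hω t
  | (n + 2), t => by
      simp only [nPath]
      exact fiber_trans (fiber_nPath hf hω (n + 1)) (fiber_map hf hω (n + 1)) t

/-- The loop `f^{kω}(θ) = k(ω) ∗ f^k(θ) ∗ k(ω)⁻¹` at `x₀`. -/
noncomputable def fpowLoop (f : C(E, E)) {x₀ : E} (ω : Path x₀ (f x₀)) (k : ℕ) (θ : Path x₀ x₀) :
    Path x₀ x₀ :=
  ((nPath f ω k).trans (θ.map (f.continuous.iterate k))).trans (nPath f ω k).symm

/-- `f^{kω}` applied to a fiber loop is again a fiber loop. -/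
noncomputable def fpowFiberLoop (p : C(E, B)) (f : C(E, E)) (hf : ∀ x, p (f x) = p x) {x₀ : E}
    (ω : Path x₀ (f x₀)) (hω : ∀ t, p (ω t) = p x₀) (k : ℕ) (θ : FiberLoop p x₀) :
    FiberLoop p x₀ :=
  ⟨fpowLoop f ω k θ.1,
    fiber_trans (fiber_trans (fiber_nPath hf hω k) (fiber_map hf θ.2 k))
      (fiber_symm (fiber_nPath hf hω k))⟩

/-- Auxiliary product `f^{0·mω}(θ) ∗ f^{1·mω}(θ) ∗ ⋯ ∗ f^{(j−1)·mω}(θ)`. -/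
noncomputable def gammaAux (f : C(E, E)) {x₀ : E} (ω : Path x₀ (f x₀)) (m : ℕ) (θ : Path x₀ x₀) :
    ℕ → Path x₀ x₀
  | 0 => Path.refl x₀
  | (j + 1) => (gammaAux f ω m θ j).trans (fpowLoop f ω (j * m) θ)

/-- The loop `γ_{m,n}(θ) = θ ∗ f^{mω}(θ) ∗ f^{2mω}(θ) ∗ ⋯ ∗ f^{(n−m)ω}(θ)`. -/
noncomputable def gammaLoop (f : C(E, E)) {x₀ : E} (ω : Path x₀ (f x₀)) (m n : ℕ) (θ : Path x₀ x₀) :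
    Path x₀ x₀ :=
  gammaAux f ω m θ (n / m)

theorem fiber_gammaAux {p : C(E, B)} {f : C(E, E)} (hf : ∀ x, p (f x) = p x) {x₀ : E}
    {ω : Path x₀ (f x₀)} (hω : ∀ t, p (ω t) = p x₀) (m : ℕ) (θ : FiberLoop p x₀) :
    ∀ (j : ℕ) (t : I), p (gammaAux f ω m θ.1 j t) = p x₀
  | 0, _ => rfl
  | (j + 1), t => by
    simp only [gammaAux]
    exact fiber_trans (fiber_gammaAux hf hω m θ j)
      (fpowFiberLoop p f hf ω hω (j * m) θ).2 t

/-- `γ_{m,n}` applied to a fiber loop is again a fiber loop. -/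
noncomputable def gammaFiberLoop (p : C(E, B)) (f : C(E, E)) (hf : ∀ x, p (f x) = p x) {x₀ : E}
    (ω : Path x₀ (f x₀)) (hω : ∀ t, p (ω t) = p x₀) (m n : ℕ) (θ : FiberLoop p x₀) :
    FiberLoop p x₀ :=
  ⟨gammaLoop f ω m n θ.1, fiber_gammaAux hf hω m θ (n / m)⟩

/-- `F` realizes the induced function `[f^ω]` on the Reidemeister classes of `f^n` over `B`. -/
def IsFOmegaMap (p : C(E, B)) (f : C(E, E)) (hf : ∀ x, p (f x) = p x) {x₀ : E}
    (ω : Path x₀ (f x₀)) (hω : ∀ t, p (ω t) = p x₀) (n : ℕ)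
    (F : ReidemeisterSetB p (iterC f n) (nPath f ω n) →
      ReidemeisterSetB p (iterC f n) (nPath f ω n)) : Prop :=
  ∀ θ : FiberLoop p x₀,
    F (Quot.mk _ θ) = Quot.mk _ (fpowFiberLoop p f hf ω hω 1 θ)

/-- `G` realizes the induced function `[γ_{m,n}]` from the Reidemeister classes of `f^m`
to those of `f^n` over `B`. -/
def IsGammaMap (p : C(E, B)) (f : C(E, E)) (hf : ∀ x, p (f x) = p x) {x₀ : E}
    (ω : Path x₀ (f x₀)) (hω : ∀ t, p (ω t) = p x₀) (m n : ℕ)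
    (G : ReidemeisterSetB p (iterC f m) (nPath f ω m) →
      ReidemeisterSetB p (iterC f n) (nPath f ω n)) : Prop :=
  ∀ θ : FiberLoop p x₀,
    G (Quot.mk _ θ) = Quot.mk _ (gammaFiberLoop p f hf ω hω m n θ)

/-- Fixed points of a continuous self-map. -/
def FixPt (g : C(E, E)) : Type := {x : E // g x = x}

/-- Nielsen equivalence over `B` of fixed points of `g`. -/
def NielsenRelB (p : C(E, B)) (g : C(E, E)) : FixPt g → FixPt g → Prop := fun x y =>
  ∃ (lam : Path x.1 y.1) (H : C(I × I, E)),
    (∀ t, H (t, 0) = lam t) ∧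
    (∀ t, H (t, 1) = g (lam t)) ∧
    (∀ s, H (0, s) = x.1) ∧
    (∀ s, H (1, s) = y.1) ∧
    (∀ t s, p (H (t, s)) = p (lam t))

/-- The set of Nielsen classes over `B`. -/
def NielsenSetB (p : C(E, B)) (g : C(E, E)) : Type := Quot (NielsenRelB p g)

/-- The space `E_B(g) = {(x, α) : p∘α const, α(0) = x, α(1) = g(x)}` with the topology
induced from `E × C(I, E)` (compact-open topology on paths). -/
def EBSpace (p : C(E, B)) (g : C(E, E)) : Type :=
  {z : E × C(I, E) // (∀ t, p (z.2 t) = p z.1) ∧ z.2 0 = z.1 ∧ z.2 1 = g z.1}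

instance (p : C(E, B)) (g : C(E, E)) : TopologicalSpace (EBSpace p g) :=
  instTopologicalSpaceSubtype

/-- Path components of a space. -/
def Pi0 (X : Type) [TopologicalSpace X] : Type := Quot (@Joined X _)

/-- The map `g_B : Fix(g) → E_B(g)`, `x ↦ (x, constant path at x)`. -/
def gBMap (p : C(E, B)) (g : C(E, E)) (x : FixPt g) : EBSpace p g :=
  ⟨(x.1, ContinuousMap.const I x.1), fun _ => rfl, rfl, x.2.symm⟩

instance (g : C(E, E)) : TopologicalSpace (FixPt g) := instTopologicalSpaceSubtype

/-- The Reidemeister class over `B` of a fiber loop. -/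
def rClass (p : C(E, B)) (g : C(E, E)) {x₀ : E} (w : Path x₀ (g x₀)) (θ : FiberLoop p x₀) :
    ReidemeisterSetB p g w := Quot.mk _ θ

/-- The Nielsen class over `B` of a fixed point. -/
def nClass (p : C(E, B)) {g : C(E, E)} (x : FixPt g) : NielsenSetB p g := Quot.mk _ x

/-- The path component of a point. -/
def piComp {X : Type} [TopologicalSpace X] (x : X) : Pi0 X := Quot.mk _ x

/-- A Reidemeister class of `f^n` over `B` is reducible to `m` if it lies in the image of
the induced function `[γ_{m,n}]`. -/
def ReducibleTo (p : C(E, B)) (f : C(E, E)) (hf : ∀ x, p (f x) = p x) {x₀ : E}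
    (ω : Path x₀ (f x₀)) (hω : ∀ t, p (ω t) = p x₀) (n m : ℕ)
    (a : ReidemeisterSetB p (iterC f n) (nPath f ω n)) : Prop :=
  ∃ G : ReidemeisterSetB p (iterC f m) (nPath f ω m) →
      ReidemeisterSetB p (iterC f n) (nPath f ω n),
    IsGammaMap p f hf ω hω m n G ∧ a ∈ Set.range G

/-!
A path in `E_B(f)` is a continuous family of fibre paths from `c t` to `f (c t)`, that is, a square
`H` lying over `c` with `H (t, 0) = c t` and `H (t, 1) = f (c t)`. With `c` a loop at `x₀` and sides
`θ ∗ ω`, `θ' ∗ ω` this is the Reidemeister relation over `B`; with `c` a path between fixed points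
and constant sides it is Nielsen equivalence over `B`. So `θ ↦ [(x₀, θ ∗ ω)]` and `x ↦ [(x, c_x)]`
descend to injections of `R_B(f; x₀, ω)` and `𝒩_B(f)` into `π₀(E_B(f))`.

The first one is onto: join `(z, α)` to `x₀` by a path `λ` and lift `(t, s) ↦ p (λ t)` with the
values `λ`, `α`, `f ∘ λ` prescribed on three sides of the square, which a Hurewicz fibration allows
because the square with three sides is homeomorphic to the square with its bottom side. The fourth
side is a fibre path `η` from `x₀` to `f x₀`, homotopic inside the fibre to `(η ∗ ω⁻¹) ∗ ω`.
-/

theorem continuous_of_eqOn_closed_cover {X Y ι : Type*} [TopologicalSpace X] [TopologicalSpace Y]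
    [Finite ι] {F : X → Y} (S : ι → Set X) (g : ι → X → Y) (hS : ∀ i, IsClosed (S i))
    (hcov : ∀ x, ∃ i, x ∈ S i) (hg : ∀ i, Continuous (g i)) (hF : ∀ i, Set.EqOn F (g i) (S i)) :
    Continuous F :=
  (locallyFinite_of_finite S).continuous (Set.iUnion_eq_univ_iff.2 hcov) hS
    fun i => (hg i).continuousOn.congr (hF i)

/-- A piecewise-linear self-homeomorphism of the unit square taking the bottom, right and top
sides onto the bottom side, as `t ↦ t / 3`, `s ↦ (s + 1) / 3` and `t ↦ 1 - t / 3`;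
`squareUnfold` is its inverse. -/
noncomputable def squareFold : ℝ × ℝ → ℝ × ℝ := fun w =>
  if 1 ≤ w.1 + w.2 then
    if w.2 ≤ w.1 then ((w.2 + 1) / 3, 1 - w.1) else ((2 * w.2 - w.1 + 1) / 3, 1 - w.2)
  else
    if w.2 ≤ w.1 then ((w.1 + 2 * w.2) / 3, w.2)
    else if 2 ≤ w.1 + 3 * w.2 then (1 - w.1, 3 - 2 * w.1 - 3 * w.2)
    else if w.1 + 1 ≤ 3 * w.2 then (3 * w.2 - 1, 1 - w.1)
    else (w.1, 3 * w.2 - 2 * w.1)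

noncomputable def squareUnfold : ℝ × ℝ → ℝ × ℝ := fun w =>
  if w.2 ≤ w.1 then
    if 1 ≤ w.1 + w.2 then (1 - w.1, (2 * w.1 - w.2 + 1) / 3)
    else if 3 * w.1 ≤ w.2 + 1 then (3 * w.1 - 2 * w.2, w.2)
    else if 3 * w.1 + w.2 ≤ 2 then (1 - w.2, 3 * w.1 - 1)
    else (3 - 3 * w.1 - 2 * w.2, 1 - w.2)
  else
    if 1 ≤ w.1 + w.2 then (1 - w.2, (w.1 + 1) / 3)
    else (w.1, (2 * w.1 + w.2) / 3)

theorem continuous_squareFold : Continuous squareFold := by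
  refine continuous_of_eqOn_closed_cover (ι := Fin 6)
    ![{w : ℝ × ℝ | 1 ≤ w.1 + w.2} ∩ {w | w.2 ≤ w.1}, {w | 1 ≤ w.1 + w.2} ∩ {w | w.1 ≤ w.2},
      {w | w.1 + w.2 ≤ 1} ∩ {w | w.2 ≤ w.1}, {w | w.1 + w.2 ≤ 1} ∩ {w | 2 ≤ w.1 + 3 * w.2},
      {w | w.1 + 3 * w.2 ≤ 2} ∩ {w | w.1 + 1 ≤ 3 * w.2}, {w | 3 * w.2 ≤ w.1 + 1} ∩ {w | w.1 ≤ w.2}]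
    ![fun w => ((w.2 + 1) / 3, 1 - w.1), fun w => ((2 * w.2 - w.1 + 1) / 3, 1 - w.2),
      fun w => ((w.1 + 2 * w.2) / 3, w.2), fun w => (1 - w.1, 3 - 2 * w.1 - 3 * w.2),
      fun w => (3 * w.2 - 1, 1 - w.1), fun w => (w.1, 3 * w.2 - 2 * w.1)] ?_ ?_ ?_ ?_
  · intro i
    fin_cases i <;> exact (isClosed_le (by fun_prop) (by fun_prop)).inter
      (isClosed_le (by fun_prop) (by fun_prop))
  · intro w
    rcases le_total 1 (w.1 + w.2) with h1 | h1 <;> rcases le_total w.2 w.1 with h2 | h2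
    · exact ⟨0, h1, h2⟩
    · exact ⟨1, h1, h2⟩
    · exact ⟨2, h1, h2⟩
    rcases le_total 2 (w.1 + 3 * w.2) with h3 | h3
    · exact ⟨3, h1, h3⟩
    rcases le_total (w.1 + 1) (3 * w.2) with h4 | h4
    · exact ⟨4, h3, h4⟩
    · exact ⟨5, h4, h2⟩
  · intro i
    fin_cases i <;> exact Continuous.prodMk (by fun_prop) (by fun_prop)
  · intro i
    fin_cases i <;> rintro ⟨a, b⟩ ⟨h1, h2⟩ <;> simp only [Set.mem_ofPred_eq] at h1 h2 <;>
      simp only [Fin.zero_eta, Fin.mk_one, Fin.reduceFinMk, Fin.isValue, Matrix.cons_val_zero,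
        Matrix.cons_val_one, Matrix.cons_val, squareFold] <;> split_ifs <;>
      refine Prod.ext ?_ ?_ <;> dsimp only <;> linarith

theorem continuous_squareUnfold : Continuous squareUnfold := by
  refine continuous_of_eqOn_closed_cover (ι := Fin 6)
    ![{w : ℝ × ℝ | w.2 ≤ w.1} ∩ {w | 1 ≤ w.1 + w.2}, {w | 3 * w.1 ≤ w.2 + 1} ∩ {w | w.2 ≤ w.1},
      {w | w.2 + 1 ≤ 3 * w.1} ∩ {w | 3 * w.1 + w.2 ≤ 2},
      {w | 2 ≤ 3 * w.1 + w.2} ∩ {w | w.1 + w.2 ≤ 1},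
      {w | w.1 ≤ w.2} ∩ {w | 1 ≤ w.1 + w.2}, {w | w.1 ≤ w.2} ∩ {w | w.1 + w.2 ≤ 1}]
    ![fun w => (1 - w.1, (2 * w.1 - w.2 + 1) / 3), fun w => (3 * w.1 - 2 * w.2, w.2),
      fun w => (1 - w.2, 3 * w.1 - 1), fun w => (3 - 3 * w.1 - 2 * w.2, 1 - w.2),
      fun w => (1 - w.2, (w.1 + 1) / 3), fun w => (w.1, (2 * w.1 + w.2) / 3)] ?_ ?_ ?_ ?_
  · intro i
    fin_cases i <;> exact (isClosed_le (by fun_prop) (by fun_prop)).inter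
      (isClosed_le (by fun_prop) (by fun_prop))
  · intro w
    rcases le_total w.2 w.1 with h1 | h1 <;> rcases le_total 1 (w.1 + w.2) with h2 | h2
    · exact ⟨0, h1, h2⟩
    · rcases le_total (3 * w.1) (w.2 + 1) with h3 | h3
      · exact ⟨1, h3, h1⟩
      rcases le_total (3 * w.1 + w.2) 2 with h4 | h4
      · exact ⟨2, h3, h4⟩
      · exact ⟨3, h4, h2⟩
    · exact ⟨4, h1, h2⟩
    · exact ⟨5, h1, h2⟩
  · intro i
    fin_cases i <;> exact Continuous.prodMk (by fun_prop) (by fun_prop)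
  · intro i
    fin_cases i <;> rintro ⟨a, b⟩ ⟨h1, h2⟩ <;> simp only [Set.mem_ofPred_eq] at h1 h2 <;>
      simp only [Fin.zero_eta, Fin.mk_one, Fin.reduceFinMk, Fin.isValue, Matrix.cons_val_zero,
        Matrix.cons_val_one, Matrix.cons_val, squareUnfold] <;> split_ifs <;>
      refine Prod.ext ?_ ?_ <;> dsimp only <;> linarith

theorem squareFold_mem {a b : ℝ} (ha : a ∈ I) (hb : b ∈ I) :
    (squareFold (a, b)).1 ∈ I ∧ (squareFold (a, b)).2 ∈ I := by
  obtain ⟨ha₀, ha₁⟩ := ha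
  obtain ⟨hb₀, hb₁⟩ := hb
  simp only [squareFold]
  split_ifs <;> exact ⟨⟨by linarith, by linarith⟩, ⟨by linarith, by linarith⟩⟩

theorem squareUnfold_mem {a b : ℝ} (ha : a ∈ I) (hb : b ∈ I) :
    (squareUnfold (a, b)).1 ∈ I ∧ (squareUnfold (a, b)).2 ∈ I := by
  obtain ⟨ha₀, ha₁⟩ := ha
  obtain ⟨hb₀, hb₁⟩ := hb
  simp only [squareUnfold]
  split_ifs <;> exact ⟨⟨by linarith, by linarith⟩, ⟨by linarith, by linarith⟩⟩

theorem squareUnfold_squareFold {a b : ℝ} (ha : a ∈ I) (hb : b ∈ I) :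
    squareUnfold (squareFold (a, b)) = (a, b) := by
  obtain ⟨ha₀, ha₁⟩ := ha
  obtain ⟨hb₀, hb₁⟩ := hb
  simp only [squareFold]
  split_ifs <;> simp only [squareUnfold] <;> split_ifs <;>
    refine Prod.ext ?_ ?_ <;> dsimp only <;> linarith

theorem squareFold_bottom {a : ℝ} (ha : a ∈ I) : squareFold (a, 0) = (a / 3, 0) := by
  obtain ⟨ha₀, ha₁⟩ := ha
  simp only [squareFold]
  split_ifs <;> refine Prod.ext ?_ ?_ <;> dsimp only <;> linarith

theorem squareFold_right {b : ℝ} (hb : b ∈ I) : squareFold (1, b) = ((b + 1) / 3, 0) := by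
  obtain ⟨hb₀, hb₁⟩ := hb
  simp only [squareFold]
  split_ifs <;> refine Prod.ext ?_ ?_ <;> dsimp only <;> linarith

theorem squareFold_top {a : ℝ} (ha : a ∈ I) : squareFold (a, 1) = ((3 - a) / 3, 0) := by
  obtain ⟨ha₀, ha₁⟩ := ha
  simp only [squareFold]
  split_ifs <;> refine Prod.ext ?_ ?_ <;> dsimp only <;> linarith

theorem squareUnfold_of_le_one_third {r : ℝ} (h₀ : 0 ≤ r) (h : 3 * r ≤ 1) :
    squareUnfold (r, 0) = (3 * r, 0) := by
  simp only [squareUnfold]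
  split_ifs <;> refine Prod.ext ?_ ?_ <;> dsimp only <;> linarith

theorem squareUnfold_of_mem_middle_third {r : ℝ} (h₁ : 1 ≤ 3 * r) (h₂ : 3 * r ≤ 2) :
    squareUnfold (r, 0) = (1, 3 * r - 1) := by
  simp only [squareUnfold]
  split_ifs <;> refine Prod.ext ?_ ?_ <;> dsimp only <;> linarith

theorem squareUnfold_of_two_thirds_le {r : ℝ} (h : 2 ≤ 3 * r) (h₁ : r ≤ 1) :
    squareUnfold (r, 0) = (3 - 3 * r, 1) := by
  simp only [squareUnfold]
  split_ifs <;> refine Prod.ext ?_ ?_ <;> dsimp only <;> linarith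

def unitSquareMap (F : ℝ × ℝ → ℝ × ℝ) (hF : Continuous F)
    (hmem : ∀ {a b : ℝ}, a ∈ I → b ∈ I → (F (a, b)).1 ∈ I ∧ (F (a, b)).2 ∈ I) :
    C(I × I, I × I) where
  toFun z := (⟨_, (hmem z.1.2 z.2.2).1⟩, ⟨_, (hmem z.1.2 z.2.2).2⟩)
  continuous_toFun := by
    have hFz : Continuous fun z : I × I => F (z.1, z.2) := hF.comp (by fun_prop)
    exact (hFz.fst.subtype_mk _).prodMk (hFz.snd.subtype_mk _)

noncomputable def squareFoldI : C(I × I, I × I) :=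
  unitSquareMap squareFold continuous_squareFold squareFold_mem

noncomputable def squareUnfoldI : C(I × I, I × I) :=
  unitSquareMap squareUnfold continuous_squareUnfold squareUnfold_mem

theorem squareUnfoldI_leftInverse : Function.LeftInverse squareUnfoldI squareFoldI := fun z =>
  Prod.ext (Subtype.ext congr($(squareUnfold_squareFold z.1.2 z.2.2).1))
    (Subtype.ext congr($(squareUnfold_squareFold z.1.2 z.2.2).2))

theorem squareFoldI_of_eq {z : I × I} {a : ℝ} (h : squareFold (z.1, z.2) = (a, 0)) :
    ((squareFoldI z).1 : ℝ) = a ∧ (squareFoldI z).2 = 0 :=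
  ⟨congr($h.1), Subtype.ext congr($h.2)⟩

theorem IsHurewiczFibration.exists_lift_of_leftInverse {p : C(E, B)} (hp : IsHurewiczFibration p)
    {φ ψ : C(I × I, I × I)} (hψφ : Function.LeftInverse ψ φ) (G : C(I × I, B)) (h₀ : C(I, E))
    (hG : ∀ r, G (ψ (r, 0)) = p (h₀ r)) :
    ∃ H : C(I × I, E), (∀ z, p (H z) = G z) ∧ ∀ z, (φ z).2 = 0 → H z = h₀ (φ z).1 := by
  obtain ⟨K, hK₀, hK⟩ := hp I (G.comp ψ) h₀ hG
  refine ⟨K.comp φ, fun z => (hK (φ z)).trans (congrArg G (hψφ z)), fun z hz => ?_⟩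
  rw [ContinuousMap.comp_apply, ← hK₀, ← hz]

section BoundaryLoop

variable {a₀ a₁ a₂ a₃ : E} (γb : Path a₀ a₁) (γr : Path a₁ a₂) (γt : Path a₃ a₂)

noncomputable def boundaryLoop : C(I, E) where
  toFun r := if (r : ℝ) ≤ 1 / 3 then γb.extend (3 * r)
    else if (r : ℝ) ≤ 2 / 3 then γr.extend (3 * r - 1) else γt.extend (3 - 3 * r)
  continuous_toFun := by
    refine Continuous.if_le (by fun_prop) (Continuous.if_le (by fun_prop) (by fun_prop)
      (by fun_prop) (by fun_prop) fun r hr => ?_) (by fun_prop) (by fun_prop) fun r hr => ?_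
    · rw [hr]; norm_num
    · rw [hr, if_pos (by norm_num)]; norm_num

theorem boundaryLoop_eq_bottom {r : I} {t : ℝ} (ht : t ∈ I) (hr : (r : ℝ) = t / 3) :
    boundaryLoop γb γr γt r = γb.extend t := by
  rw [boundaryLoop, ContinuousMap.coe_mk, if_pos (by linarith [ht.2]), hr,
    mul_div_cancel₀ _ three_ne_zero]

theorem boundaryLoop_eq_right {r : I} {s : ℝ} (hs : s ∈ I) (hr : (r : ℝ) = (s + 1) / 3) :
    boundaryLoop γb γr γt r = γr.extend s := by
  obtain ⟨hs₀, hs₁⟩ := hs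
  simp only [boundaryLoop, ContinuousMap.coe_mk, hr]
  split_ifs with h h'
  · obtain rfl : s = 0 := by linarith
    norm_num
  · congr 1; ring
  · linarith

theorem boundaryLoop_eq_top {r : I} {t : ℝ} (ht : t ∈ I) (hr : (r : ℝ) = (3 - t) / 3) :
    boundaryLoop γb γr γt r = γt.extend t := by
  obtain ⟨ht₀, ht₁⟩ := ht
  simp only [boundaryLoop, ContinuousMap.coe_mk, hr]
  split_ifs with h h'
  · linarith
  · obtain rfl : t = 1 := by linarith
    norm_num
  · congr 1; ring

theorem apply_squareUnfoldI_eq_boundaryLoop {p : C(E, B)} {G : C(I × I, B)}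
    (hb : ∀ t, p (γb t) = G (t, 0)) (hr : ∀ s, p (γr s) = G (1, s))
    (ht : ∀ t, p (γt t) = G (t, 1)) (r : I) :
    G (squareUnfoldI (r, 0)) = p (boundaryLoop γb γr γt r) := by
  have hGb : ∀ z : I × I, (z.2 : ℝ) = 0 → G z = p (γb.extend z.1) := fun z hz => by
    rw [Path.extend_extends', hb]; exact congrArg G (Prod.ext rfl (Subtype.ext hz))
  have hGr : ∀ z : I × I, (z.1 : ℝ) = 1 → G z = p (γr.extend z.2) := fun z hz => by
    rw [Path.extend_extends', hr]; exact congrArg G (Prod.ext (Subtype.ext hz) rfl)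
  have hGt : ∀ z : I × I, (z.2 : ℝ) = 1 → G z = p (γt.extend z.1) := fun z hz => by
    rw [Path.extend_extends', ht]; exact congrArg G (Prod.ext rfl (Subtype.ext hz))
  obtain ⟨hr₀, hr₁⟩ := r.2
  have hu : (((squareUnfoldI (r, 0)).1 : ℝ), ((squareUnfoldI (r, 0)).2 : ℝ)) =
      squareUnfold (r, 0) := rfl
  rcases le_total (3 * (r : ℝ)) 1 with h₁ | h₁
  · rw [squareUnfold_of_le_one_third hr₀ h₁, Prod.mk.injEq] at hu
    rw [hGb _ hu.2, hu.1,
      boundaryLoop_eq_bottom γb γr γt (t := 3 * r) ⟨by linarith, h₁⟩ (by ring)]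
  rcases le_total (3 * (r : ℝ)) 2 with h₂ | h₂
  · rw [squareUnfold_of_mem_middle_third h₁ h₂, Prod.mk.injEq] at hu
    rw [hGr _ hu.1, hu.2,
      boundaryLoop_eq_right γb γr γt (s := 3 * r - 1) ⟨by linarith, by linarith⟩ (by ring)]
  · rw [squareUnfold_of_two_thirds_le h₂ hr₁, Prod.mk.injEq] at hu
    rw [hGt _ hu.2, hu.1,
      boundaryLoop_eq_top γb γr γt (t := 3 - 3 * r) ⟨by linarith, by linarith⟩ (by ring)]

end BoundaryLoop

theorem IsHurewiczFibration.exists_lift_of_three_sides {p : C(E, B)} (hp : IsHurewiczFibration p)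
    (G : C(I × I, B)) {a₀ a₁ a₂ a₃ : E} (γb : Path a₀ a₁) (γr : Path a₁ a₂) (γt : Path a₃ a₂)
    (hb : ∀ t, p (γb t) = G (t, 0)) (hr : ∀ s, p (γr s) = G (1, s))
    (ht : ∀ t, p (γt t) = G (t, 1)) :
    ∃ H : C(I × I, E), (∀ t, H (t, 0) = γb t) ∧ (∀ s, H (1, s) = γr s) ∧
      (∀ t, H (t, 1) = γt t) ∧ ∀ z, p (H z) = G z := by
  obtain ⟨H, hHG, hH⟩ := hp.exists_lift_of_leftInverse squareUnfoldI_leftInverse G _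
    (apply_squareUnfoldI_eq_boundaryLoop γb γr γt hb hr ht)
  refine ⟨H, fun t => ?_, fun s => ?_, fun t => ?_, hHG⟩
  · obtain ⟨h₁, h₂⟩ := squareFoldI_of_eq (z := (t, 0)) (squareFold_bottom t.2)
    rw [hH _ h₂, boundaryLoop_eq_bottom γb γr γt t.2 h₁, Path.extend_extends']
  · obtain ⟨h₁, h₂⟩ := squareFoldI_of_eq (z := (1, s)) (squareFold_right s.2)
    rw [hH _ h₂, boundaryLoop_eq_right γb γr γt s.2 h₁, Path.extend_extends']
  · obtain ⟨h₁, h₂⟩ := squareFoldI_of_eq (z := (t, 1)) (squareFold_top t.2)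
    rw [hH _ h₂, boundaryLoop_eq_top γb γr γt t.2 h₁, Path.extend_extends']

theorem piComp_eq_piComp_iff {X : Type} [TopologicalSpace X] {x y : X} :
    piComp x = piComp y ↔ Joined x y :=
  Quot.eq.trans (pathSetoid X).iseqv.eqvGen_iff

theorem Quot.lift_injective_of_iff {α β : Sort*} {r : α → α → Prop} {f : α → β}
    (h : ∀ a b, r a b ↔ f a = f b) : Function.Injective (Quot.lift f fun a b => (h a b).1) := by
  rintro ⟨a⟩ ⟨b⟩ hab
  exact Quot.sound ((h a b).2 hab)

namespace EBSpace

variable {p : C(E, B)} {g : C(E, E)}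

def ofPath {x : E} (γ : Path x (g x)) (hγ : ∀ s, p (γ s) = p x) : EBSpace p g :=
  ⟨(x, γ.toContinuousMap), hγ, γ.source, γ.target⟩

theorem ext {z z' : EBSpace p g} (h₁ : z.1.1 = z'.1.1) (h₂ : ∀ s, z.1.2 s = z'.1.2 s) :
    z = z' :=
  Subtype.ext (Prod.ext h₁ (ContinuousMap.ext h₂))

theorem joined_iff {z z' : EBSpace p g} :
    Joined z z' ↔ ∃ (c : Path z.1.1 z'.1.1) (H : C(I × I, E)),
      (∀ t, H (t, 0) = c t) ∧ (∀ s, H (0, s) = z.1.2 s) ∧ (∀ t, H (t, 1) = g (c t)) ∧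
      (∀ s, H (1, s) = z'.1.2 s) ∧ ∀ t s, p (H (t, s)) = p (c t) := by
  constructor
  · rintro ⟨P⟩
    have hP : Continuous fun t => (P t).1 := continuous_subtype_val.comp P.continuous
    refine ⟨⟨⟨fun t => (P t).1.1, hP.fst⟩, by simp, by simp⟩,
      (ContinuousMap.mk (fun t => (P t).1.2) hP.snd).uncurry,
      fun t => (P t).2.2.1, fun s => by simp, fun t => (P t).2.2.2, fun s => by simp,
      fun t s => (P t).2.1 s⟩
  · rintro ⟨c, H, hb, hl, ht, hr, hfib⟩
    refine ⟨⟨⟨fun t => ⟨(c t, H.curry t), fun s => hfib t s, hb t, ht t⟩, ?_⟩, ?_, ?_⟩⟩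
    · exact (c.continuous.prodMk H.curry.continuous).subtype_mk _
    · exact ext c.source hl
    · exact ext c.target hr

theorem joined_ofPath_of_homotopic {x : E} {hgx : p (g x) = p x}
    {γ γ' : Path (⟨x, rfl⟩ : {y // p y = p x}) ⟨g x, hgx⟩} (h : γ.Homotopic γ') :
    Joined (ofPath (γ.map continuous_subtype_val) fun s => (γ s).2)
      (ofPath (γ'.map continuous_subtype_val) fun s => (γ' s).2) := by
  obtain ⟨F⟩ := h
  refine joined_iff.2 ⟨Path.refl x, ⟨fun z => F z, by fun_prop⟩, fun t => congr($(F.source t).1),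
    fun s => congr($(F.apply_zero s).1), fun t => congr($(F.target t).1),
    fun s => congr($(F.apply_one s).1), fun t s => (F (t, s)).2⟩

theorem joined_ofPath_trans_symm_trans {x : E} {η ω : Path x (g x)} (hη : ∀ s, p (η s) = p x)
    (hω : ∀ s, p (ω s) = p x) :
    Joined (ofPath ((η.trans ω.symm).trans ω) (fiber_trans (fiber_trans hη (fiber_symm hω)) hω))
      (ofPath η hη) := by
  have hgx : p (g x) = p x := by simpa using hη 1
  let toFiber : ∀ γ : Path x (g x), (∀ s, p (γ s) = p x) →
      Path (⟨x, rfl⟩ : {y // p y = p x}) ⟨g x, hgx⟩ := fun γ hγ =>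
    ⟨⟨fun s => ⟨γ s, hγ s⟩, γ.continuous.subtype_mk _⟩, Subtype.ext γ.source,
      Subtype.ext γ.target⟩
  let η' := toFiber η hη
  let ω' := toFiber ω hω
  have hom : ((η'.trans ω'.symm).trans ω').Homotopic η' :=
    Path.Homotopic.trans ⟨.transAssoc η' ω'.symm ω'⟩ <|
      ((Path.Homotopic.refl η').hcomp ⟨(Path.Homotopy.reflSymmTrans ω').symm⟩).trans
        ⟨.transRefl η'⟩
  have hmap : ∀ γ hγ, (toFiber γ hγ).map continuous_subtype_val = γ := fun _ _ => rfl
  simpa only [Path.map_trans, ← Path.map_symm, η', ω', hmap] using joined_ofPath_of_homotopic hom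

theorem exists_joined_ofPath (hp : IsHurewiczFibration p) (hg : ∀ y, p (g y) = p y)
    (z : EBSpace p g) {x : E} (c : Path x z.1.1) :
    ∃ (η : Path x (g x)) (hη : ∀ s, p (η s) = p x), Joined (ofPath η hη) z := by
  obtain ⟨H, hb, hr, ht, hH⟩ := hp.exists_lift_of_three_sides
    (p.comp (c.toContinuousMap.comp ContinuousMap.fst)) c ⟨z.1.2, z.2.2.1, z.2.2.2⟩
    (c.map g.continuous) (fun t => rfl) (fun s => (z.2.1 s).trans congr(p $c.target.symm))
    (fun t => hg _)
  let η : Path x (g x) :=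
    ⟨⟨fun s => H (0, s), by fun_prop⟩, by simp [hb], by simp [ht]⟩
  exact ⟨η, fun s => (hH (0, s)).trans congr(p $c.source),
    joined_iff.2 ⟨c, H, hb, fun s => rfl, ht, hr, fun t s => hH (t, s)⟩⟩

end EBSpace

section Classes

variable {p : C(E, B)} {g : C(E, E)}

noncomputable def FiberLoop.toEBSpace {x₀ : E} {w : Path x₀ (g x₀)} (hw : ∀ t, p (w t) = p x₀)
    (θ : FiberLoop p x₀) : EBSpace p g :=
  EBSpace.ofPath (θ.1.trans w) (fiber_trans θ.2 hw)

theorem reidemeisterRelB_iff_joined {x₀ : E} {w : Path x₀ (g x₀)} (hw : ∀ t, p (w t) = p x₀)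
    {θ θ' : FiberLoop p x₀} :
    ReidemeisterRelB p g w θ θ' ↔ Joined (θ.toEBSpace hw) (θ'.toEBSpace hw) :=
  (EBSpace.joined_iff (z := θ.toEBSpace hw) (z' := θ'.toEBSpace hw)).symm

theorem nielsenRelB_iff_joined {x y : FixPt g} :
    NielsenRelB p g x y ↔ Joined (gBMap p g x) (gBMap p g y) := by
  rw [EBSpace.joined_iff]
  constructor <;> rintro ⟨c, H, h₁, h₂, h₃, h₄, h₅⟩ <;> exact ⟨c, H, h₁, h₃, h₂, h₄, h₅⟩

noncomputable def ReidemeisterSetB.toPi0 {x₀ : E} {w : Path x₀ (g x₀)}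
    (hw : ∀ t, p (w t) = p x₀) : ReidemeisterSetB p g w → Pi0 (EBSpace p g) :=
  Quot.lift (fun θ => piComp (θ.toEBSpace hw)) fun _ _ h =>
    piComp_eq_piComp_iff.2 ((reidemeisterRelB_iff_joined hw).1 h)

theorem ReidemeisterSetB.toPi0_injective {x₀ : E} {w : Path x₀ (g x₀)}
    (hw : ∀ t, p (w t) = p x₀) : Function.Injective (ReidemeisterSetB.toPi0 hw) :=
  Quot.lift_injective_of_iff fun θ θ' =>
    (reidemeisterRelB_iff_joined hw (θ := θ) (θ' := θ')).trans piComp_eq_piComp_iff.symm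

theorem ReidemeisterSetB.toPi0_surjective [PathConnectedSpace E] (hp : IsHurewiczFibration p)
    (hg : ∀ y, p (g y) = p y) {x₀ : E} {w : Path x₀ (g x₀)} (hw : ∀ t, p (w t) = p x₀) :
    Function.Surjective (ReidemeisterSetB.toPi0 hw) := by
  rintro ⟨z⟩
  obtain ⟨η, hη, hηz⟩ :=
    EBSpace.exists_joined_ofPath hp hg z (PathConnectedSpace.somePath x₀ z.1.1)
  refine ⟨Quot.mk _ ⟨η.trans w.symm, fiber_trans hη (fiber_symm hw)⟩, ?_⟩
  exact piComp_eq_piComp_iff.2 ((EBSpace.joined_ofPath_trans_symm_trans hη hw).trans hηz)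

def NielsenSetB.toPi0 (p : C(E, B)) (g : C(E, E)) : NielsenSetB p g → Pi0 (EBSpace p g) :=
  Quot.lift (fun x => piComp (gBMap p g x)) fun _ _ h =>
    piComp_eq_piComp_iff.2 (nielsenRelB_iff_joined.1 h)

theorem NielsenSetB.toPi0_injective : Function.Injective (NielsenSetB.toPi0 p g) :=
  Quot.lift_injective_of_iff fun x y =>
    (nielsenRelB_iff_joined (x := x) (y := y)).trans piComp_eq_piComp_iff.symm

end Classes

theorem nielsen_to_reidemeister_injective_general {E B : Type} [TopologicalSpace E] [TopologicalSpace B]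
    [PathConnectedSpace E]
    (p : C(E, B)) (hp : IsHurewiczFibration p)
    (f : C(E, E)) (hf : ∀ x, p (f x) = p x)
    (x₀ : E) (ω : Path x₀ (f x₀)) (hω : ∀ t, p (ω t) = p x₀) :
    ∃ Γ : ReidemeisterSetB p f ω → Pi0 (EBSpace p f),
      Function.Bijective Γ ∧
      (∀ (θ : FiberLoop p x₀) (z : EBSpace p f),
        z.1.1 = x₀ → (∀ s, z.1.2 s = (θ.1.trans ω) s) →
        Γ (rClass p f ω θ) = piComp z) ∧
      ∃ φ : NielsenSetB p f → ReidemeisterSetB p f ω,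
        Function.Injective φ ∧
        ∀ x : FixPt f, Γ (φ (nClass p x)) = piComp (gBMap p f x) := by
  have hΓ : Function.Bijective (ReidemeisterSetB.toPi0 hω) :=
    ⟨ReidemeisterSetB.toPi0_injective hω, ReidemeisterSetB.toPi0_surjective hp hf hω⟩
  let Γ := Equiv.ofBijective _ hΓ
  refine ⟨Γ, hΓ, fun θ z hz₁ hz₂ => ?_, Γ.symm ∘ NielsenSetB.toPi0 p f,
    Γ.symm.injective.comp NielsenSetB.toPi0_injective, fun x => Γ.apply_symm_apply _⟩
  exact congrArg piComp (EBSpace.ext hz₁.symm fun s => (hz₂ s).symm)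

theorem nielsen_to_reidemeister_injective {E B : Type} [TopologicalSpace E] [TopologicalSpace B]
    [CompactSpace E] [CompactSpace B] [PathConnectedSpace E] [PathConnectedSpace B]
    [T2Space E] [T2Space B] {dE dB : ℕ}
    [ChartedSpace (EuclideanSpace ℝ (Fin dE)) E]
    [ChartedSpace (EuclideanSpace ℝ (Fin dB)) B]
    (p : C(E, B)) (hp : IsHurewiczFibration p)
    (f : C(E, E)) (hf : ∀ x, p (f x) = p x)
    (x₀ : E) (ω : Path x₀ (f x₀)) (hω : ∀ t, p (ω t) = p x₀) :
    ∃ Γ : ReidemeisterSetB p f ω → Pi0 (EBSpace p f),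
      Function.Bijective Γ ∧
      (∀ (θ : FiberLoop p x₀) (z : EBSpace p f),
        z.1.1 = x₀ → (∀ s, z.1.2 s = (θ.1.trans ω) s) →
        Γ (rClass p f ω θ) = piComp z) ∧
      ∃ φ : NielsenSetB p f → ReidemeisterSetB p f ω,
        Function.Injective φ ∧
        ∀ x : FixPt f, Γ (φ (nClass p x)) = piComp (gBMap p f x) :=
  nielsen_to_reidemeister_injective_general p hp f hf x₀ ω hω
end

section
/- There is a well-defined function [f^ω]: R_B(f^n; x₀, n(ω)) → R_B(f^n; x₀, n(ω)) satisfying: (i) [f^ω]([θ]) = [f^ω(θ)] for every θ ∈ π₁(Y, x₀); (ii) [f^ω] ∘ j = j ∘ f^ω, where j: π₁(Y, x₀) → R_B(f^n; x₀, n(ω)) is the natural projection; and (iii) [f^ω]^n is the identity function on R_B(f^n; x₀, n(ω)). -/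
open unitInterval

variable {E B : Type} [TopologicalSpace E] [TopologicalSpace B]

/-!
The relation `θ ~ θ'` says that `θ ∗ n(ω)` and `θ' ∗ n(ω)` lie in one path component of
`E_B(f^n)`, the space of paths `α` in a fiber with `α 1 = f^n (α 0)`. Such a component is closed
under homotopy in the fiber `Y = p⁻¹(p x₀)` (to which `f` restricts), under sliding
`α ∗ w ~ w ∗ g(α)` for `α`, `w` in one fiber, and `f`, which preserves fibers and commutes with
`f^n`, maps components to components.

Sliding `θ` along itself gives `θ ∗ n(ω) ~ n(ω) ∗ f^n(θ) ≃ f^{nω}(θ) ∗ n(ω)`, and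
`f^{nω} = (f^ω)^n` in `π₁(Y)`, so `[f^ω]^n = id`. Sliding `ω` along `f(θ) ∗ ω⁻¹ ∗ n(ω)` gives
`f^ω(θ) ∗ n(ω) ~ f(θ ∗ n(ω))`, because `n(ω) ∗ f^n(ω) ≃ ω ∗ f(n(ω))` in `Y`; hence `f^ω`
respects the relation, as `f` does.
-/

namespace Path.Homotopic.Quotient

variable {X Y : Type*} [TopologicalSpace X] [TopologicalSpace Y] {x₀ x₁ x₂ : X}

theorem map_trans (γ : Path.Homotopic.Quotient x₀ x₁) (δ : Path.Homotopic.Quotient x₁ x₂)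
    (f : C(X, Y)) : (γ.trans δ).map f = (γ.map f).trans (δ.map f) := by
  induction γ using Quotient.ind
  induction δ using Quotient.ind
  simp only [← mk_trans, ← mk_map, Path.map_trans]

theorem symm_trans_rev (γ : Path.Homotopic.Quotient x₀ x₁) (δ : Path.Homotopic.Quotient x₁ x₂) :
    (γ.trans δ).symm = δ.symm.trans γ.symm := by
  induction γ using Quotient.ind
  induction δ using Quotient.ind
  simp only [← mk_symm, ← mk_trans, Path.trans_symm]

theorem trans_cast {x₂' : X} (γ : Path.Homotopic.Quotient x₀ x₁)
    (δ : Path.Homotopic.Quotient x₁ x₂) (h : x₂' = x₂) :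
    γ.trans (δ.cast rfl h) = (γ.trans δ).cast rfl h := by
  subst h; simp

theorem cast_trans_cast {x₁' x₂' : X} (γ : Path.Homotopic.Quotient x₀ x₁)
    (δ : Path.Homotopic.Quotient x₁ x₂) (h₁ : x₁' = x₁) (h₂ : x₂' = x₂) :
    (γ.cast rfl h₁).trans (δ.cast h₁ h₂) = (γ.trans δ).cast rfl h₂ := by
  subst h₁ h₂; simp

end Path.Homotopic.Quotient

section PathAlgebra

open Path.Homotopic.Quotient

variable {X : Type} [TopologicalSpace X] (φ : C(X, X)) {x₀ : X} (ω : Path x₀ (φ x₀))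

/-- The segment `f^k(ω)` of `n(ω)`, typed to end at `f^[k + 1] x₀` rather than at the
definitionally equal `f^[k] (f x₀)`, so that it rewrites against `nPath`. -/
def nPathStep (k : ℕ) : Path ((⇑φ)^[k] x₀) ((⇑φ)^[k + 1] x₀) :=
  ω.map (φ.continuous.iterate k)

theorem nPathStep_succ (k : ℕ) :
    nPathStep φ ω (k + 1) =
      ((nPathStep φ ω k).map φ.continuous).cast
        (Function.iterate_succ_apply' φ k x₀) (Function.iterate_succ_apply' φ (k + 1) x₀) := by
  ext t
  exact Function.iterate_succ_apply' φ k (ω t)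

theorem mk_nPath_succ (k : ℕ) :
    mk (nPath φ ω (k + 1)) = (mk (nPath φ ω k)).trans (mk (nPathStep φ ω k)) := by
  cases k with
  | zero => exact (refl_trans _).symm
  | succ k => rfl

theorem mk_nPath_succ' (k : ℕ) :
    mk (nPath φ ω (k + 1)) =
      ((mk ω).trans ((mk (nPath φ ω k)).map φ)).cast rfl (Function.iterate_succ_apply' φ k x₀) := by
  induction k with
  | zero => exact (trans_refl _).symm
  | succ k ih =>
    conv_rhs => rw [mk_nPath_succ φ ω k, map_trans, ← trans_assoc]
    rw [mk_nPath_succ φ ω (k + 1), ih, nPathStep_succ, mk_cast, mk_map]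
    exact cast_trans_cast _ _ _ _

theorem fpowLoop_one (θ : Path x₀ x₀) :
    fpowLoop φ ω 1 θ = (ω.trans (θ.map φ.continuous)).trans ω.symm :=
  rfl

theorem mk_fpowLoop_fpowLoop_one (k : ℕ) (θ : Path x₀ x₀) :
    mk (fpowLoop φ ω k (fpowLoop φ ω 1 θ)) = mk (fpowLoop φ ω (k + 1) θ) := by
  rw [fpowLoop_one, fpowLoop, fpowLoop, Path.map_trans, Path.map_trans, ← Path.map_symm]
  simp only [mk_trans, mk_symm, mk_nPath_succ, symm_trans_rev, trans_assoc]
  rfl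

theorem mk_fpowLoop_one_iterate (k : ℕ) (θ : Path x₀ x₀) :
    mk ((fpowLoop φ ω 1)^[k] θ) = mk (fpowLoop φ ω k θ) := by
  induction k generalizing θ with
  | zero =>
    simp only [Function.iterate_zero, id_eq, fpowLoop, nPath, Path.map_id, Path.refl_symm, mk_trans,
      mk_refl, refl_trans, trans_refl]
  | succ k ih => rw [Function.iterate_succ_apply, ih, mk_fpowLoop_fpowLoop_one]

end PathAlgebra

section Naturality

variable {X X' : Type} [TopologicalSpace X] [TopologicalSpace X']

theorem Path.trans_apply_of_apply_eq {h : X → X'} {x y z : X} {x' y' z' : X'}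
    {γ : Path x y} {δ : Path y z} {γ' : Path x' y'} {δ' : Path y' z'}
    (hγ : ∀ t, γ' t = h (γ t)) (hδ : ∀ t, δ' t = h (δ t)) (t : I) :
    (γ'.trans δ') t = h ((γ.trans δ) t) := by
  rw [Path.trans_apply, Path.trans_apply]
  split_ifs
  exacts [hγ _, hδ _]

variable {φ : C(X, X)} {φ' : C(X', X')} {h : X → X'} {x₀ : X} {ω : Path x₀ (φ x₀)}
  {ω' : Path (h x₀) (φ' (h x₀))}

theorem Path.map_iterate_apply_of_semiconj (hφ : Function.Semiconj h φ φ') {a b : X} {a' b' : X'}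
    {γ : Path a b} {γ' : Path a' b'} (hγ : ∀ t, γ' t = h (γ t)) (k : ℕ) (t : I) :
    γ'.map (φ'.continuous.iterate k) t = h (γ.map (φ.continuous.iterate k) t) := by
  simp only [Path.map_coe, Function.comp_apply, hγ, (hφ.iterate_right k).eq]

theorem nPath_apply_of_semiconj (hφ : Function.Semiconj h φ φ') (hω : ∀ t, ω' t = h (ω t)) :
    ∀ (k : ℕ) (t : I), nPath φ' ω' k t = h (nPath φ ω k t)
  | 0, _ => rfl
  | 1, t => hω t
  | k + 2, t => Path.trans_apply_of_apply_eq (nPath_apply_of_semiconj hφ hω (k + 1))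
      (Path.map_iterate_apply_of_semiconj hφ hω (k + 1)) t

theorem fpowLoop_apply_of_semiconj (hφ : Function.Semiconj h φ φ') (hω : ∀ t, ω' t = h (ω t))
    {θ : Path x₀ x₀} {θ' : Path (h x₀) (h x₀)} (hθ : ∀ t, θ' t = h (θ t)) (k : ℕ) (t : I) :
    fpowLoop φ' ω' k θ' t = h (fpowLoop φ ω k θ t) :=
  Path.trans_apply_of_apply_eq
    (Path.trans_apply_of_apply_eq (nPath_apply_of_semiconj hφ hω k)
      (Path.map_iterate_apply_of_semiconj hφ hθ k))
    (fun t => nPath_apply_of_semiconj hφ hω k (σ t)) t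

end Naturality

namespace ContinuousMap.HomotopicWith

variable {X Y Z : Type*} [TopologicalSpace X] [TopologicalSpace Y] [TopologicalSpace Z]
  {f₀ f₁ : C(X, Y)} {P Q : C(X, Y) → Prop}

theorem mono (h : HomotopicWith f₀ f₁ P) (hPQ : ∀ c, P c → Q c) : HomotopicWith f₀ f₁ Q :=
  h.map fun F => ⟨F.toHomotopy, fun t => hPQ _ (F.prop t)⟩

theorem comp_continuousMap {R : C(X, Z) → Prop} (h : HomotopicWith f₀ f₁ P) (g : C(Y, Z))
    (hPR : ∀ c, P c → R (g.comp c)) : HomotopicWith (g.comp f₀) (g.comp f₁) R :=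
  let ⟨F⟩ := h
  ⟨{ toHomotopy := (Homotopy.refl g).comp F.toHomotopy
     prop' := fun t => hPR (F.toHomotopy.curry t) (F.prop t) }⟩

end ContinuousMap.HomotopicWith

section Twisted

open ContinuousMap

variable {X : Type} [TopologicalSpace X]

def TwistedHomotopic (ψ : X → X) (γ δ : C(I, X)) : Prop :=
  HomotopicWith γ δ fun c => c 1 = ψ (c 0)

theorem Path.Homotopic.twistedHomotopic {ψ : X → X} {x y : X} {γ δ : Path x y}
    (h : γ.Homotopic δ) (hy : y = ψ x) :
    TwistedHomotopic ψ γ.toContinuousMap δ.toContinuousMap :=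
  HomotopicWith.mono h fun c hc => by
    rw [hc 1 (by simp), hc 0 (by simp)]
    simpa using hy

theorem twistedHomotopic_slide (ψ : C(X, X)) {a b : X} (α : Path a b) (w : Path b (ψ a)) :
    TwistedHomotopic ψ (α.trans w).toContinuousMap
      (w.trans (α.map ψ.continuous)).toContinuousMap := by
  -- `P` runs through `α`, `w`, `ψ ∘ α` on `[0, 1]`, `[1, 2]`, `[2, 3]`;
  -- the slice at time `t` is `P` on `[t, t + 2]`.
  let P : ℝ → X := fun r =>
    if r ≤ 1 then α.extend r else if r ≤ 2 then w.extend (r - 1) else ψ (α.extend (r - 2))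
  have hP : Continuous P := by
    refine Continuous.if_le α.continuous_extend (Continuous.if_le ?_ ?_ continuous_id
      continuous_const ?_) continuous_id continuous_const ?_
    · exact w.continuous_extend.comp (by fun_prop)
    · exact ψ.continuous.comp (α.continuous_extend.comp (by fun_prop))
    all_goals intro r hr; norm_num [hr, Path.extend_one]
  refine ⟨⟨⟨⟨fun z => P (z.1 + 2 * z.2), by fun_prop⟩, ?_, ?_⟩, ?_⟩⟩
  · intro s
    have hs := s.2.2
    change P (0 + 2 * s) = if (s : ℝ) ≤ 1 / 2 then α.extend (2 * s) else w.extend (2 * s - 1)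
    simp only [P, zero_add]
    split_ifs <;> first | rfl | linarith
  · intro s
    have hs := s.2.1
    change P (1 + 2 * s) =
      if (s : ℝ) ≤ 1 / 2 then w.extend (2 * s) else (α.map ψ.continuous).extend (2 * s - 1)
    simp only [P]
    split_ifs with h₁ h₂ h₃ h₃ h₂ <;> try linarith
    · rw [α.extend_of_one_le (by linarith), w.extend_of_le_zero (by linarith)]
    · congr 1; ring
    · have hmem : 2 * (s : ℝ) - 1 ∈ Set.Icc (0 : ℝ) 1 := ⟨by linarith, by linarith [s.2.2]⟩
      rw [show 1 + 2 * (s : ℝ) - 2 = 2 * s - 1 by ring, α.extend_apply hmem,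
        (α.map ψ.continuous).extend_apply hmem]
      rfl
  · intro t
    have ht₀ := t.2.1
    have ht₁ := t.2.2
    change P (t + 2 * 1) = ψ (P (t + 2 * 0))
    simp only [P, mul_one, mul_zero, add_zero, add_sub_cancel_right]
    split_ifs <;> first | rfl | linarith |
      rw [w.extend_of_one_le (by linarith), α.extend_of_le_zero (by linarith)]

end Twisted

section FOmega

open Path.Homotopic.Quotient

variable {X : Type} [TopologicalSpace X] (φ : C(X, X)) {x₀ : X} (ω : Path x₀ (φ x₀))

theorem twistedHomotopic_fpowLoop_one_iterate (n : ℕ) (θ : Path x₀ x₀) :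
    TwistedHomotopic (iterC φ n) (θ.trans (nPath φ ω n)).toContinuousMap
      (((fpowLoop φ ω 1)^[n] θ).trans (nPath φ ω n)).toContinuousMap := by
  have hconj : ((nPath φ ω n).trans (θ.map (φ.continuous.iterate n))).Homotopic
      (((fpowLoop φ ω 1)^[n] θ).trans (nPath φ ω n)) := by
    rw [← Path.Homotopic.Quotient.eq, mk_trans, mk_trans, mk_fpowLoop_one_iterate, fpowLoop]
    simp
  exact ContinuousMap.HomotopicWith.trans (twistedHomotopic_slide (iterC φ n) θ (nPath φ ω n))
    (hconj.twistedHomotopic rfl)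

theorem twistedHomotopic_fpowLoop_one (n : ℕ) (τ : Path x₀ x₀) :
    TwistedHomotopic (iterC φ n) ((fpowLoop φ ω 1 τ).trans (nPath φ ω n)).toContinuousMap
      ((τ.trans (nPath φ ω n)).map φ.continuous).toContinuousMap := by
  let W := (τ.map φ.continuous).trans (ω.symm.trans (nPath φ ω n))
  have hW : ((fpowLoop φ ω 1 τ).trans (nPath φ ω n)).Homotopic (ω.trans W) := by
    rw [← Path.Homotopic.Quotient.eq, fpowLoop_one]
    simp [W]
  have hfW : (W.trans (nPathStep φ ω n)).Homotopic
      (((τ.trans (nPath φ ω n)).map φ.continuous).cast rfl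
        (Function.iterate_succ_apply' φ n x₀)) := by
    rw [← Path.Homotopic.Quotient.eq]
    calc mk (W.trans (nPathStep φ ω n))
        = (mk (τ.map φ.continuous)).trans ((mk ω).symm.trans (mk (nPath φ ω (n + 1)))) := by
          simp only [W, mk_trans, mk_symm, mk_nPath_succ, trans_assoc]
      _ = _ := by
          rw [mk_nPath_succ', trans_cast, trans_cast, ← trans_assoc (mk ω).symm, symm_trans,
            refl_trans, mk_cast, mk_map, mk_map, mk_trans, map_trans]
  exact ContinuousMap.HomotopicWith.trans (hW.twistedHomotopic rfl) <|
    ContinuousMap.HomotopicWith.trans (twistedHomotopic_slide (iterC φ n) ω W)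
      (hfW.twistedHomotopic rfl)

end FOmega

/-- `γ` and `δ` lie in one path component of `E_B(g)`; a path `c` with `p ∘ c` constant and
`c 1 = g (c 0)` stands for the point `(c 0, c)` of `E_B(g)`. -/
def EBJoined (p : C(E, B)) (g : C(E, E)) (γ δ : C(I, E)) : Prop :=
  ContinuousMap.HomotopicWith γ δ fun c => (∀ s, p (c s) = p (c 0)) ∧ c 1 = g (c 0)

theorem reidemeisterRelB_iff_ebJoined (p : C(E, B)) (g : C(E, E)) {x₀ : E} (w : Path x₀ (g x₀))
    (θ θ' : FiberLoop p x₀) :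
    ReidemeisterRelB p g w θ θ' ↔
      EBJoined p g (θ.1.trans w).toContinuousMap (θ'.1.trans w).toContinuousMap := by
  constructor
  · rintro ⟨c, H, hbot, hleft, htop, hright, hfib⟩
    exact ⟨⟨⟨H, hleft, hright⟩, fun t => ⟨fun s => (hfib t s).trans (hfib t 0).symm,
      (htop t).trans (congrArg g (hbot t)).symm⟩⟩⟩
  · rintro ⟨F⟩
    refine ⟨⟨⟨fun t => F (t, 0), by fun_prop⟩, ?_, ?_⟩, F.toContinuousMap, fun t => rfl,
      F.apply_zero, fun t => (F.prop t).2, F.apply_one, fun t s => (F.prop t).1 s⟩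
    · exact (F.apply_zero 0).trans (θ.1.trans w).source
    · exact (F.apply_one 0).trans (θ'.1.trans w).source

theorem EBJoined.symm {p : C(E, B)} {g : C(E, E)} {γ δ : C(I, E)} (h : EBJoined p g γ δ) :
    EBJoined p g δ γ :=
  ContinuousMap.HomotopicWith.symm h

theorem EBJoined.trans {p : C(E, B)} {g : C(E, E)} {γ δ ε : C(I, E)} (h₁ : EBJoined p g γ δ)
    (h₂ : EBJoined p g δ ε) : EBJoined p g γ ε :=
  ContinuousMap.HomotopicWith.trans h₁ h₂

theorem EBJoined.comp {p : C(E, B)} {g : C(E, E)} {γ δ : C(I, E)} (h : EBJoined p g γ δ)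
    (k : C(E, E)) (hpk : ∀ x, p (k x) = p x) (hgk : ∀ x, k (g x) = g (k x)) :
    EBJoined p g (k.comp γ) (k.comp δ) :=
  ContinuousMap.HomotopicWith.comp_continuousMap h k fun _ ⟨hfib, htop⟩ =>
    ⟨fun s => by simp [hpk, hfib s], by simp [htop, hgk]⟩

abbrev Fiber (p : C(E, B)) (b : B) : Type := {x : E // p x = b}

def fiberIncl (p : C(E, B)) (b : B) : C(Fiber p b, E) := ⟨Subtype.val, continuous_subtype_val⟩

theorem TwistedHomotopic.ebJoined {p : C(E, B)} {g : C(E, E)} {b : B}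
    {ĝ : C(Fiber p b, Fiber p b)} {γ δ : C(I, Fiber p b)} (h : TwistedHomotopic ĝ γ δ)
    (hg : ∀ y, (ĝ y : E) = g y) :
    EBJoined p g ((fiberIncl p b).comp γ) ((fiberIncl p b).comp δ) :=
  ContinuousMap.HomotopicWith.comp_continuousMap h _ fun c hc =>
    ⟨fun s => (c s).2.trans (c 0).2.symm, (congrArg Subtype.val hc).trans (hg _)⟩

def fiberRestrict (p : C(E, B)) (f : C(E, E)) (hf : ∀ x, p (f x) = p x) (b : B) :
    C(Fiber p b, Fiber p b) :=
  ⟨Subtype.map f fun x hx => (hf x).trans hx, f.continuous.subtype_map _⟩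

def Path.toFiber {p : C(E, B)} {b : B} {x y : E} (γ : Path x y) (hγ : ∀ t, p (γ t) = b) :
    Path (⟨x, γ.source ▸ hγ 0⟩ : Fiber p b) ⟨y, γ.target ▸ hγ 1⟩ where
  toFun t := ⟨γ t, hγ t⟩
  continuous_toFun := γ.continuous.subtype_mk _
  source' := Subtype.ext γ.source
  target' := Subtype.ext γ.target

def FiberLoop.toPath {p : C(E, B)} {x₀ : E} (θ : FiberLoop p x₀) :
    Path (⟨x₀, rfl⟩ : Fiber p (p x₀)) ⟨x₀, rfl⟩ :=
  θ.1.toFiber θ.2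

section FiberOfBasePoint

variable (p : C(E, B)) (f : C(E, E)) (hf : ∀ x, p (f x) = p x) (x₀ : E)
  (ω : Path x₀ (f x₀)) (hω : ∀ t, p (ω t) = p x₀)

local notation "fY" => fiberRestrict p f hf (p x₀)
local notation "ωY" => Path.toFiber ω hω

theorem coe_iterC_fiberRestrict (n : ℕ) (y : Fiber p (p x₀)) :
    (iterC fY n y : E) = iterC f n y :=
  Function.Semiconj.iterate_right (f := Subtype.val) (ga := fY) (fun _ => rfl) n y

theorem FiberLoop.toPath_fpowFiberLoop (k : ℕ) (θ : FiberLoop p x₀) :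
    (fpowFiberLoop p f hf ω hω k θ).toPath = fpowLoop fY ωY k θ.toPath :=
  Path.ext <| funext fun t => Subtype.ext <|
    fpowLoop_apply_of_semiconj (φ := fY) (φ' := f) (h := Subtype.val) (ω := ωY) (ω' := ω)
      (θ := θ.toPath) (θ' := θ.1) (fun _ => rfl) (fun _ => rfl) (fun _ => rfl) k t

theorem FiberLoop.toPath_fpowFiberLoop_one_iterate (n : ℕ) (θ : FiberLoop p x₀) :
    ((fpowFiberLoop p f hf ω hω 1)^[n] θ).toPath = (fpowLoop fY ωY 1)^[n] θ.toPath :=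
  Function.Semiconj.iterate_right (FiberLoop.toPath_fpowFiberLoop p f hf x₀ ω hω 1) n θ

theorem reidemeisterRelB_iff_ebJoined_toPath (n : ℕ) (θ θ' : FiberLoop p x₀) :
    ReidemeisterRelB p (iterC f n) (nPath f ω n) θ θ' ↔
      EBJoined p (iterC f n)
        ((fiberIncl p (p x₀)).comp (θ.toPath.trans (nPath fY ωY n)).toContinuousMap)
        ((fiberIncl p (p x₀)).comp (θ'.toPath.trans (nPath fY ωY n)).toContinuousMap) := by
  have hincl : ∀ τ : FiberLoop p x₀,
      (fiberIncl p (p x₀)).comp (τ.toPath.trans (nPath fY ωY n)).toContinuousMap =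
        (τ.1.trans (nPath f ω n)).toContinuousMap := fun τ =>
    ContinuousMap.ext fun t => (Path.trans_apply_of_apply_eq (fun _ => rfl)
      (nPath_apply_of_semiconj (h := Subtype.val) (fun _ => rfl) (fun _ => rfl) n) t).symm
  rw [hincl, hincl]
  exact reidemeisterRelB_iff_ebJoined p (iterC f n) (nPath f ω n) θ θ'

theorem reidemeisterRelB_fpowFiberLoop_one_iterate (n : ℕ) (θ : FiberLoop p x₀) :
    ReidemeisterRelB p (iterC f n) (nPath f ω n) θ ((fpowFiberLoop p f hf ω hω 1)^[n] θ) := by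
  rw [reidemeisterRelB_iff_ebJoined_toPath p f hf x₀ ω hω,
    FiberLoop.toPath_fpowFiberLoop_one_iterate]
  exact (twistedHomotopic_fpowLoop_one_iterate fY ωY n _).ebJoined
    (coe_iterC_fiberRestrict p f hf x₀ n)

theorem ebJoined_fpowFiberLoop_one (n : ℕ) (τ : FiberLoop p x₀) :
    EBJoined p (iterC f n)
      ((fiberIncl p (p x₀)).comp
        ((fpowFiberLoop p f hf ω hω 1 τ).toPath.trans (nPath fY ωY n)).toContinuousMap)
      (f.comp ((fiberIncl p (p x₀)).comp (τ.toPath.trans (nPath fY ωY n)).toContinuousMap)) := by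
  rw [FiberLoop.toPath_fpowFiberLoop]
  exact (twistedHomotopic_fpowLoop_one fY ωY n _).ebJoined (coe_iterC_fiberRestrict p f hf x₀ n)

theorem reidemeisterRelB_fpowFiberLoop_one (n : ℕ) (θ θ' : FiberLoop p x₀)
    (h : ReidemeisterRelB p (iterC f n) (nPath f ω n) θ θ') :
    ReidemeisterRelB p (iterC f n) (nPath f ω n)
      (fpowFiberLoop p f hf ω hω 1 θ) (fpowFiberLoop p f hf ω hω 1 θ') := by
  rw [reidemeisterRelB_iff_ebJoined_toPath p f hf x₀ ω hω] at h ⊢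
  have hcomm : ∀ x, f (iterC f n x) = iterC f n (f x) := fun x =>
    (Function.iterate_succ_apply' f n x).symm
  exact (ebJoined_fpowFiberLoop_one p f hf x₀ ω hω n θ).trans
    ((h.comp f hf hcomm).trans (ebJoined_fpowFiberLoop_one p f hf x₀ ω hω n θ').symm)

end FiberOfBasePoint

theorem fOmega_induced_on_reidemeister_general {E B : Type} [TopologicalSpace E] [TopologicalSpace B]
    (p : C(E, B))
    (f : C(E, E)) (hf : ∀ x, p (f x) = p x)
    (x₀ : E) (ω : Path x₀ (f x₀)) (hω : ∀ t, p (ω t) = p x₀)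
    (n : ℕ) :
    ∃ F : ReidemeisterSetB p (iterC f n) (nPath f ω n) →
        ReidemeisterSetB p (iterC f n) (nPath f ω n),
      (∀ θ : FiberLoop p x₀,
        F (rClass p (iterC f n) (nPath f ω n) θ)
          = rClass p (iterC f n) (nPath f ω n) (fpowFiberLoop p f hf ω hω 1 θ)) ∧
      F^[n] = id := by
  let F : ReidemeisterSetB p (iterC f n) (nPath f ω n) →
      ReidemeisterSetB p (iterC f n) (nPath f ω n) :=
    Quot.map (fpowFiberLoop p f hf ω hω 1) (reidemeisterRelB_fpowFiberLoop_one p f hf x₀ ω hω n)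
  have hF : Function.Semiconj (rClass p (iterC f n) (nPath f ω n))
      (fpowFiberLoop p f hf ω hω 1) F := fun _ => rfl
  refine ⟨F, hF, funext fun a => ?_⟩
  obtain ⟨θ⟩ := a
  exact ((hF.iterate_right n).eq θ).symm.trans
    (Quot.sound (reidemeisterRelB_fpowFiberLoop_one_iterate p f hf x₀ ω hω n θ)).symm

theorem fOmega_induced_on_reidemeister {E B : Type} [TopologicalSpace E] [TopologicalSpace B]
    [CompactSpace E] [CompactSpace B] [PathConnectedSpace E] [PathConnectedSpace B]
    [T2Space E] [T2Space B] {dE dB : ℕ}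
    [ChartedSpace (EuclideanSpace ℝ (Fin dE)) E]
    [ChartedSpace (EuclideanSpace ℝ (Fin dB)) B]
    (p : C(E, B)) (hp : IsHurewiczFibration p)
    (f : C(E, E)) (hf : ∀ x, p (f x) = p x)
    (x₀ : E) (ω : Path x₀ (f x₀)) (hω : ∀ t, p (ω t) = p x₀)
    (n : ℕ) (hn : 0 < n) :
    ∃ F : ReidemeisterSetB p (iterC f n) (nPath f ω n) →
        ReidemeisterSetB p (iterC f n) (nPath f ω n),
      (∀ θ : FiberLoop p x₀,
        F (rClass p (iterC f n) (nPath f ω n) θ)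
          = rClass p (iterC f n) (nPath f ω n) (fpowFiberLoop p f hf ω hω 1 θ)) ∧
      F^[n] = id :=
  fOmega_induced_on_reidemeister_general p f hf x₀ ω hω n
end
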